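/- arXiv:2204.13461 — 2 statements merged into one kernel-verified Lean document; each statement's English description precedes it below -/
import Mathlib

section
/- Let K be a number field, S a finite set of maximal ideals of its ring of integers, and a, b ∈ O_{K,S} nonzero. Suppose there exists N₀ such that for all integers n > N₀, every maximal ideal of O_{K,S} that contains a^n − 1 also contains b^n − 1. If a is a root of unity of order k, then b^k = 1, i.e., b is a root of unity whose order divides k. -/
/-!
Since `a ^ k = 1`, the hypothesis at the exponents `n = k m` says that `(b ^ k) ^ m ≡ 1` modulo
every maximal ideal of `O_{K,S}` for all large `m`; two consecutive values of `m` give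
`b ^ k ≡ 1`, so `b ^ k - 1` lies in the Jacobson radical. That radical is zero: for
`y = r / s ≠ 0`, pick a prime `v ∉ S` not containing `r` (there are infinitely many primes, as
over `ℤ`) and `w` with `w r ≡ 1 mod v`; then the `S`-integer `1 - s w y = 1 - w r` has positive
`v`-adic valuation, so it is not a unit.
-/

open IsDedekindDomain NumberField

namespace IsDedekindDomain.HeightOneSpectrum

theorem infinite_of_isIntegral (A B : Type*) [CommRing A] [IsDedekindDomain A] [CommRing B]
    [IsDedekindDomain B] [Algebra A B] [Algebra.IsIntegral A B] [FaithfulSMul A B]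
    [Infinite (HeightOneSpectrum A)] : Infinite (HeightOneSpectrum B) := by
  have h_over (v : HeightOneSpectrum A) :
      ∃ w : HeightOneSpectrum B, w.asIdeal.LiesOver v.asIdeal := by
    have := v.isMaximal
    obtain ⟨Q, hQ, hlies⟩ := Ideal.exists_maximal_ideal_liesOver_of_isIntegral (S := B) v.asIdeal
    exact ⟨⟨Q, hQ.isPrime, Ideal.ne_bot_of_liesOver_of_ne_bot v.ne_bot Q⟩, hlies⟩
  choose f hf using h_over
  refine Infinite.of_injective f fun v v' h ↦ ?_
  ext1
  rw [(hf v).over, (hf v').over, h]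

instance : Infinite (HeightOneSpectrum ℤ) :=
  Rat.HeightOneSpectrum.primesEquiv.infinite_iff.mpr inferInstance

instance _root_.NumberField.infinite_heightOneSpectrum (K : Type*) [Field K] [NumberField K] :
    Infinite (HeightOneSpectrum (𝓞 K)) :=
  infinite_of_isIntegral ℤ (𝓞 K)

theorem exists_notMem_asIdeal {R : Type*} [CommRing R] [IsDedekindDomain R]
    [Infinite (HeightOneSpectrum R)] {S : Set (HeightOneSpectrum R)} (hS : S.Finite) {r : R}
    (hr : r ≠ 0) : ∃ v ∉ S, r ∉ v.asIdeal := by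
  have hfin : (S ∪ {v | v.asIdeal ∣ Ideal.span {r}}).Finite :=
    hS.union (Ideal.finite_factors (by simpa using hr))
  obtain ⟨v, hv⟩ := hfin.infinite_compl.nonempty
  simp only [Set.mem_compl_iff, Set.mem_union, Set.mem_ofPred_eq, not_or,
    Ideal.dvd_span_singleton] at hv
  exact ⟨v, hv⟩

end IsDedekindDomain.HeightOneSpectrum

namespace Set

variable {R : Type*} [CommRing R] [IsDedekindDomain R] (K : Type*) [Field K] [Algebra R K]
  [IsFractionRing R K] (S : Set (HeightOneSpectrum R))

theorem valuation_units_integer_eq_one (u : (S.integer K)ˣ) {v : HeightOneSpectrum R}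
    (hv : v ∉ S) : v.valuation K (u : K) = 1 := by
  simpa using S.unit_valuation_eq_one K ((S.unitEquivUnitsInteger K).symm u) hv

theorem jacobson_bot_integer_eq_bot [Infinite (HeightOneSpectrum R)] (hS : S.Finite) :
    (⊥ : Ideal (S.integer K)).jacobson = ⊥ := by
  refine eq_bot_iff.mpr fun y hy ↦ ?_
  by_contra hy0
  obtain ⟨r, s, hs, hrs⟩ := IsFractionRing.div_surjective R (y : K)
  have hr : r ≠ 0 := by
    rintro rfl
    exact hy0 (Subtype.ext (by simp [← hrs]))
  obtain ⟨v, hvS, hrv⟩ := HeightOneSpectrum.exists_notMem_asIdeal hS hr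
  obtain ⟨w, c, hcv, hwc⟩ := v.isMaximal.exists_inv hrv
  obtain ⟨u, hu⟩ := Ideal.mem_jacobson_bot.mp hy (algebraMap R (S.integer K) (-(s * w)))
  have hs0 : algebraMap R K s ≠ 0 := IsFractionRing.to_map_ne_zero_of_mem_nonZeroDivisors hs
  have hcoe : (u : K) = algebraMap R K c := by
    have hz : (algebraMap R (S.integer K) (-(s * w)) : K) = -(algebraMap R K (s * w)) := by
      simp
    rw [hu, eq_sub_of_add_eq' hwc, Subalgebra.coe_add, Subalgebra.coe_mul, hz, ← hrs]
    simp only [Subalgebra.coe_one, map_sub, map_one, map_mul]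
    field_simp
    ring
  have := valuation_units_integer_eq_one K S u hvS
  rw [hcoe] at this
  exact ((v.valuation_lt_one_iff_mem c).mpr hcv).ne this

end Set

theorem sub_one_mem_of_pow_sub_one_mem_of_pow_succ_sub_one_mem {R : Type*} [CommRing R]
    {I : Ideal R} {x : R} {m : ℕ} (hm : x ^ m - 1 ∈ I) (hm' : x ^ (m + 1) - 1 ∈ I) :
    x - 1 ∈ I := by
  have h : x - 1 = (x ^ (m + 1) - 1) - x * (x ^ m - 1) := by ring
  rw [h]
  exact I.sub_mem hm' (I.mul_mem_left x hm)

theorem pow_sub_one_mem_jacobson_bot_of_support {R : Type*} [CommRing R] {a b : R} {N₀ k : ℕ}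
    (hk : 0 < k) (hak : a ^ k = 1)
    (hsupp : ∀ n : ℕ, N₀ < n → ∀ 𝔭 : Ideal R, 𝔭.IsMaximal → a ^ n - 1 ∈ 𝔭 → b ^ n - 1 ∈ 𝔭) :
    b ^ k - 1 ∈ (⊥ : Ideal R).jacobson := by
  refine Submodule.mem_sInf.mpr fun 𝔭 h𝔭 ↦ ?_
  have hpow (m : ℕ) (hm : N₀ < m) : (b ^ k) ^ m - 1 ∈ 𝔭 := by
    rw [← pow_mul]
    refine hsupp (k * m) (hm.trans_le (Nat.le_mul_of_pos_left m hk)) 𝔭 h𝔭.2 ?_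
    rw [pow_mul, hak, one_pow, sub_self]
    exact 𝔭.zero_mem
  exact sub_one_mem_of_pow_sub_one_mem_of_pow_succ_sub_one_mem (hpow (N₀ + 1) (by omega))
    (hpow (N₀ + 2) (by omega))

theorem support_problem_root_of_unity_case_general
    (K : Type*) [Field K] [NumberField K]
    (S : Finset (HeightOneSpectrum (𝓞 K)))
    (a b : (S : Set (HeightOneSpectrum (𝓞 K))).integer K)
    (N₀ : ℕ)
    (hsupp : ∀ n : ℕ, N₀ < n →
      ∀ 𝔭 : Ideal ((S : Set (HeightOneSpectrum (𝓞 K))).integer K), 𝔭.IsMaximal →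
        a ^ n - 1 ∈ 𝔭 → b ^ n - 1 ∈ 𝔭)
    (k : ℕ) (hk : 0 < k) (horder : orderOf a = k) :
    b ^ k = 1 := by
  have hak : a ^ k = 1 := horder ▸ pow_orderOf_eq_one a
  have hjac := pow_sub_one_mem_jacobson_bot_of_support hk hak hsupp
  rwa [Set.jacobson_bot_integer_eq_bot K _ S.finite_toSet, Ideal.mem_bot, sub_eq_zero] at hjac

theorem support_problem_root_of_unity_case
    (K : Type*) [Field K] [NumberField K]
    (S : Finset (HeightOneSpectrum (𝓞 K)))
    (a b : (S : Set (HeightOneSpectrum (𝓞 K))).integer K) (ha : a ≠ 0) (hb : b ≠ 0)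
    (N₀ : ℕ)
    (hsupp : ∀ n : ℕ, N₀ < n →
      ∀ 𝔭 : Ideal ((S : Set (HeightOneSpectrum (𝓞 K))).integer K), 𝔭.IsMaximal →
        a ^ n - 1 ∈ 𝔭 → b ^ n - 1 ∈ 𝔭)
    (k : ℕ) (hk : 0 < k) (horder : orderOf a = k) :
    b ^ k = 1 :=
  support_problem_root_of_unity_case_general K S a b N₀ hsupp k hk horder
end

section
/- Let K be a number field, S a finite set of maximal ideals of O_K, 𝔭 a maximal ideal of O_{K,S} of residue characteristic p, and a ∈ O_{K,S} \ 𝔭. For positive integers n, write n = n₀ p^ℓ with p ∤ n₀. Then Ψ_n(a) ∈ 𝔭 if and only if the multiplicative order of a modulo 𝔭 equals n₀. -/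
open IsDedekindDomain NumberField Polynomial

theorem cyclotomic_value_mem_prime_iff_orderOf_eq
    (K : Type*) [Field K] [NumberField K]
    (S : Finset (HeightOneSpectrum (𝓞 K)))
    (𝔭 : Ideal ((S : Set (HeightOneSpectrum (𝓞 K))).integer K)) (h𝔭 : 𝔭.IsMaximal)
    (p : ℕ) (hp : p.Prime)
    (hchar : CharP (((S : Set (HeightOneSpectrum (𝓞 K))).integer K) ⧸ 𝔭) p)
    (a : (S : Set (HeightOneSpectrum (𝓞 K))).integer K) (ha : a ∉ 𝔭)
    (n n₀ ℓ : ℕ) (hn : 0 < n) (hn₀ : n = n₀ * p ^ ℓ) (hp₀ : ¬ p ∣ n₀) :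
    (cyclotomic n ((S : Set (HeightOneSpectrum (𝓞 K))).integer K)).eval a ∈ 𝔭 ↔
      orderOf (Ideal.Quotient.mk 𝔭 a) = n₀ := by
  haveI := Fact.mk hp
  haveI := h𝔭.isPrime
  haveI : NeZero ((n₀ : ℕ) : ((S : Set (HeightOneSpectrum (𝓞 K))).integer K) ⧸ 𝔭) :=
    ⟨fun h => hp₀ ((CharP.cast_eq_zero_iff _ p n₀).1 h)⟩
  have hmap : Ideal.Quotient.mk 𝔭 ((cyclotomic n _).eval a) =
      (cyclotomic n (((S : Set (HeightOneSpectrum (𝓞 K))).integer K) ⧸ 𝔭)).eval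
        (Ideal.Quotient.mk 𝔭 a) := by
    rw [← map_cyclotomic n (Ideal.Quotient.mk 𝔭), eval_map, eval₂_at_apply]
  have key := isRoot_cyclotomic_prime_pow_mul_iff_of_charP (m := n₀) (k := ℓ) (p := p)
    (μ := Ideal.Quotient.mk 𝔭 a)
    (R := ((S : Set (HeightOneSpectrum (𝓞 K))).integer K) ⧸ 𝔭)
  rw [IsRoot.def] at key
  rw [← Ideal.Quotient.eq_zero_iff_mem, hmap, hn₀, mul_comm n₀ (p ^ ℓ), key]
  exact ⟨fun h => h.eq_orderOf.symm, fun h => h ▸ IsPrimitiveRoot.orderOf _⟩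
end
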